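/- For any connected graph G of order n ≥ 2 with maximum degree Δ, Δ·γ_oidR(G) ≥ Δ·n − (Δ−2)·α(G), where α(G) is the independence number (equivalently γ_oidR(G) ≥ n − (Δ−2)α(G)/Δ). -/
import Mathlib


open SimpleGraph Finset

/-- Outer independent double Roman dominating function. -/
def IsOIDRDF {V : Type*} (G : SimpleGraph V) (f : V → ℕ) : Prop :=
  (∀ v, f v ≤ 3) ∧
  (∀ v, f v = 0 → (∃ u, G.Adj v u ∧ f u = 3) ∨
    (∃ u w, u ≠ w ∧ G.Adj v u ∧ G.Adj v w ∧ f u = 2 ∧ f w = 2)) ∧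
  (∀ v, f v = 1 → ∃ u, G.Adj v u ∧ 2 ≤ f u) ∧
  (∀ u v, G.Adj u v → f u = 0 → f v ≠ 0)

/-- Outer independent double Roman domination number. -/
noncomputable def oidRNum {V : Type*} (G : SimpleGraph V) [Fintype V] : ℕ :=
  sInf {w | ∃ f : V → ℕ, IsOIDRDF G f ∧ w = ∑ v, f v}

/-- Outer independent Roman dominating function. -/
def IsOIRDF {V : Type*} (G : SimpleGraph V) (f : V → ℕ) : Prop :=
  (∀ v, f v ≤ 2) ∧
  (∀ v, f v = 0 → ∃ u, G.Adj v u ∧ f u = 2) ∧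
  (∀ u v, G.Adj u v → f u = 0 → f v ≠ 0)

/-- Outer independent Roman domination number. -/
noncomputable def oiRNum {V : Type*} (G : SimpleGraph V) [Fintype V] : ℕ :=
  sInf {w | ∃ f : V → ℕ, IsOIRDF G f ∧ w = ∑ v, f v}

/-- Vertex cover number. -/
noncomputable def coverNum {V : Type*} (G : SimpleGraph V) [Fintype V] : ℕ :=
  sInf {k | ∃ S : Finset V, S.card = k ∧ ∀ u v, G.Adj u v → u ∈ S ∨ v ∈ S}

/-- Domination number. -/
noncomputable def domNum {V : Type*} (G : SimpleGraph V) [Fintype V] : ℕ :=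
  sInf {k | ∃ S : Finset V, S.card = k ∧ ∀ v, v ∉ S → ∃ u ∈ S, G.Adj v u}

/-- Independence number. -/
noncomputable def indNum {V : Type*} (G : SimpleGraph V) [Fintype V] : ℕ :=
  sSup {k | ∃ S : Finset V, S.card = k ∧ ∀ u ∈ S, ∀ v ∈ S, ¬ G.Adj u v}

/-- Maximum degree. -/
noncomputable def maxDeg {V : Type*} (G : SimpleGraph V) [Fintype V] : ℕ :=
  sSup (Set.range fun v => Nat.card {u | G.Adj v u})

/-- Underlying relation for the corona product. -/
def coronaRel {V W : Type*} (G : SimpleGraph V) (H : SimpleGraph W) :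
    (V ⊕ V × W) → (V ⊕ V × W) → Prop
  | Sum.inl u, Sum.inl v => G.Adj u v
  | Sum.inl u, Sum.inr p => u = p.1
  | Sum.inr p, Sum.inl u => u = p.1
  | Sum.inr p, Sum.inr q => p.1 = q.1 ∧ H.Adj p.2 q.2

/-- The corona product `G ⊙ H`. -/
def corona {V W : Type*} (G : SimpleGraph V) (H : SimpleGraph W) :
    SimpleGraph (V ⊕ V × W) :=
  SimpleGraph.fromRel (coronaRel G H)


lemma oidR_exists {V : Type*} [Fintype V] (G : SimpleGraph V) :
    ∃ f : V → ℕ, IsOIDRDF G f ∧ oidRNum G = ∑ v, f v := by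
  have hne : {w | ∃ f : V → ℕ, IsOIDRDF G f ∧ w = ∑ v, f v}.Nonempty :=
    ⟨∑ _v : V, 2, fun _ => 2, ⟨fun v => by norm_num,
      fun v h => by simp at h, fun v h => by simp at h, fun u v _ h => by simp at h⟩, rfl⟩
  exact Nat.sInf_mem hne

theorem stmt12 {V : Type*} [Fintype V] (G : SimpleGraph V)
    (hn : 2 ≤ Fintype.card V) (hc : G.Connected) :
    (maxDeg G : ℤ) * (Fintype.card V : ℤ) - ((maxDeg G : ℤ) - 2) * (indNum G : ℤ) ≤
      (maxDeg G : ℤ) * (oidRNum G : ℤ) := by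
  classical
  obtain ⟨f, ⟨hf3, hf0, hf1, hind⟩, hw⟩ := oidR_exists G
  set Δ := maxDeg G with hΔdef
  set N : V → Finset V := fun v => univ.filter (fun u => G.Adj v u) with hN
  have hmemN : ∀ v u : V, u ∈ N v ↔ G.Adj v u := by
    intro v u; simp [hN]
  have hcard : ∀ v : V, Nat.card {u | G.Adj v u} = (N v).card := by
    intro v
    rw [Nat.card_coe_set_eq, Set.ncard_eq_toFinset_card', Set.toFinset_setOf]
  have hbdd : BddAbove (Set.range fun v : V => Nat.card {u | G.Adj v u}) := by
    refine ⟨Fintype.card V, ?_⟩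
    rintro k ⟨v, rfl⟩
    dsimp only
    rw [hcard]
    exact (card_le_univ _).trans (by simp)
  have hdeg : ∀ v : V, (N v).card ≤ Δ := by
    intro v
    rw [← hcard]
    exact le_csSup hbdd ⟨v, rfl⟩
  -- there is an edge
  obtain ⟨v₀, u₀, hvu⟩ : ∃ v u : V, G.Adj v u := by
    obtain ⟨a, b, hab⟩ := Fintype.exists_pair_of_one_lt_card (by omega : 1 < Fintype.card V)
    obtain ⟨p⟩ := hc.preconnected a b
    cases p with
    | nil => exact absurd rfl hab
    | cons h q => exact ⟨_, _, h⟩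
  have hΔ1 : 1 ≤ Δ := by
    have : 0 < (N v₀).card := card_pos.mpr ⟨u₀, (hmemN v₀ u₀).mpr hvu⟩
    have := hdeg v₀
    omega
  set V₀ : Finset V := univ.filter (fun v => f v = 0) with hV₀
  set g : V → ℕ := fun u => f u - 1 with hg
  -- weight identity
  have hA : (∑ v, f v) + V₀.card = (∑ v, g v) + Fintype.card V := by
    have hpt : ∀ v : V, f v + (if f v = 0 then 1 else 0) = g v + 1 := by
      intro v
      simp only [hg]
      split <;> omega
    calc (∑ v, f v) + V₀.card = ∑ v, (f v + if f v = 0 then 1 else 0) := by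
          rw [hV₀, card_filter, Finset.sum_add_distrib]
      _ = ∑ v : V, (g v + 1) := Finset.sum_congr rfl (fun v _ => hpt v)
      _ = (∑ v, g v) + Fintype.card V := by
          rw [Finset.sum_add_distrib]
          simp
  -- independence bound
  have hα : V₀.card ≤ indNum G := by
    have hmem : V₀.card ∈ {k | ∃ S : Finset V, S.card = k ∧ ∀ u ∈ S, ∀ v ∈ S, ¬ G.Adj u v} := by
      refine ⟨V₀, rfl, fun u hu v hv hadj => ?_⟩
      exact hind u v hadj (by simpa [hV₀] using hu) (by simpa [hV₀] using hv)
    exact le_csSup ⟨Fintype.card V, fun k hk => by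
      obtain ⟨S, hS, -⟩ := hk
      exact hS ▸ (card_le_univ S).trans (by simp)⟩ hmem
  -- counting bound
  have hB : 2 * V₀.card ≤ Δ * ∑ v, g v := by
    have hB1 : ∀ v ∈ V₀, 2 ≤ ∑ u ∈ N v, g u := by
      intro v hv
      have hv0 : f v = 0 := by simpa [hV₀] using hv
      rcases hf0 v hv0 with ⟨u, hadj, hu3⟩ | ⟨u, w, huw, hau, haw, hu2, hw2⟩
      · calc (2 : ℕ) = g u := by simp [hg, hu3]
          _ ≤ ∑ u ∈ N v, g u :=
            Finset.single_le_sum (fun i _ => Nat.zero_le _) ((hmemN v u).mpr hadj)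
      · have hsub : ({u, w} : Finset V) ⊆ N v := by
          intro x hx
          rcases Finset.mem_insert.mp hx with rfl | hx
          · exact (hmemN v x).mpr hau
          · rw [Finset.mem_singleton] at hx
            subst hx
            exact (hmemN v x).mpr haw
        calc (2 : ℕ) = ∑ x ∈ ({u, w} : Finset V), g x := by
              rw [Finset.sum_pair huw]; simp [hg, hu2, hw2]
          _ ≤ ∑ u ∈ N v, g u := Finset.sum_le_sum_of_subset hsub
    have hB2 : 2 * V₀.card ≤ ∑ v ∈ V₀, ∑ u ∈ N v, g u := by
      calc 2 * V₀.card = ∑ _v ∈ V₀, 2 := by rw [Finset.sum_const]; ring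
        _ ≤ _ := Finset.sum_le_sum hB1
    have hB3 : ∑ v ∈ V₀, ∑ u ∈ N v, g u
        = ∑ u, (V₀.filter (fun v => G.Adj v u)).card * g u := by
      have step1 : ∀ v, ∑ u ∈ N v, g u = ∑ u, (if G.Adj v u then g u else 0) := by
        intro v
        rw [hN, Finset.sum_filter]
      calc ∑ v ∈ V₀, ∑ u ∈ N v, g u
          = ∑ v ∈ V₀, ∑ u, (if G.Adj v u then g u else 0) := by
            exact Finset.sum_congr rfl (fun v _ => step1 v)
        _ = ∑ u, ∑ v ∈ V₀, (if G.Adj v u then g u else 0) := Finset.sum_comm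
        _ = ∑ u, (V₀.filter (fun v => G.Adj v u)).card * g u := by
            refine Finset.sum_congr rfl (fun u _ => ?_)
            rw [← Finset.sum_filter, Finset.sum_const, smul_eq_mul]
    have hB4 : ∀ u : V, (V₀.filter (fun v => G.Adj v u)).card ≤ Δ := by
      intro u
      refine le_trans (card_le_card ?_) (hdeg u)
      intro x hx
      exact (hmemN u x).mpr ((Finset.mem_filter.mp hx).2.symm)
    calc 2 * V₀.card ≤ ∑ v ∈ V₀, ∑ u ∈ N v, g u := hB2
      _ = ∑ u, (V₀.filter (fun v => G.Adj v u)).card * g u := hB3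
      _ ≤ ∑ u, Δ * g u := Finset.sum_le_sum (fun u _ =>
          Nat.mul_le_mul_right _ (hB4 u))
      _ = Δ * ∑ v, g v := by rw [Finset.mul_sum]
  by_cases hΔ2 : 2 ≤ Δ
  · -- main case
    have h1 : ((Δ : ℤ) - 2) * (V₀.card : ℤ) ≤ ((Δ : ℤ) - 2) * (indNum G : ℤ) := by
      apply mul_le_mul_of_nonneg_left (by exact_mod_cast hα)
      have : (2 : ℤ) ≤ (Δ : ℤ) := by exact_mod_cast hΔ2
      linarith
    have h2 : ((∑ v, f v : ℕ) : ℤ) + (V₀.card : ℤ)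
        = ((∑ v, g v : ℕ) : ℤ) + (Fintype.card V : ℤ) := by exact_mod_cast hA
    have h2Δ : (Δ : ℤ) * ((∑ v, f v : ℕ) : ℤ) + (Δ : ℤ) * (V₀.card : ℤ)
        = (Δ : ℤ) * ((∑ v, g v : ℕ) : ℤ) + (Δ : ℤ) * (Fintype.card V : ℤ) := by
      linear_combination (Δ : ℤ) * h2
    have h3 : (2 : ℤ) * (V₀.card : ℤ) ≤ (Δ : ℤ) * ((∑ v, g v : ℕ) : ℤ) := by exact_mod_cast hB
    rw [hw]
    linarith [h1, h2Δ, h3]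
  · -- Δ = 1 : the graph is K₂
    have hΔeq : Δ = 1 := by omega
    have huniq : ∀ a x y : V, G.Adj a x → G.Adj a y → x = y := by
      intro a x y hx hy
      by_contra hne
      have hsub : ({x, y} : Finset V) ⊆ N a := by
        intro z hz
        rcases Finset.mem_insert.mp hz with rfl | hz
        · exact (hmemN a z).mpr hx
        · rw [Finset.mem_singleton] at hz
          subst hz
          exact (hmemN a z).mpr hy
      have h2 : 2 ≤ (N a).card := by
        calc 2 = ({x, y} : Finset V).card := (Finset.card_pair hne).symm
          _ ≤ (N a).card := card_le_card hsub
      have := hdeg a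
      omega
    have key : ∀ (a x : V), G.Walk a x → (a = v₀ ∨ a = u₀) → (x = v₀ ∨ x = u₀) := by
      intro a x p
      induction p with
      | nil => exact id
      | cons h q ih =>
        intro ha
        apply ih
        rcases ha with rfl | rfl
        · right; exact huniq _ _ _ h hvu
        · left; exact huniq _ _ _ h hvu.symm
    have hcover : ∀ x : V, x = v₀ ∨ x = u₀ := fun x =>
      key v₀ x (hc.preconnected v₀ x).some (Or.inl rfl)
    have hn2 : Fintype.card V ≤ 2 := by
      have hsub : (univ : Finset V) ⊆ {v₀, u₀} := by
        intro x _
        rcases hcover x with rfl | rfl <;> simp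
      calc Fintype.card V = (univ : Finset V).card := (Finset.card_univ).symm
        _ ≤ ({v₀, u₀} : Finset V).card := card_le_card hsub
        _ = 2 := Finset.card_pair hvu.ne
    have hαle : indNum G ≤ 1 := by
      have hne0 : {k | ∃ S : Finset V, S.card = k ∧ ∀ u ∈ S, ∀ v ∈ S, ¬ G.Adj u v}.Nonempty :=
        ⟨0, ∅, by simp, by simp⟩
      refine csSup_le hne0 ?_
      rintro k ⟨S, rfl, hS⟩
      by_contra hk
      push_neg at hk
      obtain ⟨x, hx, y, hy, hxy⟩ := Finset.one_lt_card.mp hk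
      rcases hcover x with rfl | rfl <;> rcases hcover y with rfl | rfl
      · exact hxy rfl
      · exact hS _ hx _ hy hvu
      · exact hS _ hx _ hy hvu.symm
      · exact hxy rfl
    have hnbr : ∀ x, G.Adj v₀ x → x = u₀ := fun x hx => huniq v₀ x u₀ hx hvu
    have hnbr' : ∀ x, G.Adj u₀ x → x = v₀ := fun x hx => huniq u₀ x v₀ hx hvu.symm
    have hsum : f v₀ + f u₀ ≤ ∑ x, f x := by
      calc f v₀ + f u₀ = ∑ x ∈ ({v₀, u₀} : Finset V), f x := (Finset.sum_pair hvu.ne).symm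
        _ ≤ ∑ x, f x := Finset.sum_le_sum_of_subset (subset_univ _)
    have hw3 : 3 ≤ ∑ x, f x := by
      have key2 : 3 ≤ f v₀ + f u₀ := by
        rcases Nat.eq_zero_or_pos (f v₀) with h0 | hpos
        · rcases hf0 v₀ h0 with ⟨u, hadj, hu3⟩ | ⟨u, w, hneuw, hau, haw, -, -⟩
          · have := hnbr u hadj
            subst this
            omega
          · exact absurd ((hnbr u hau).trans (hnbr w haw).symm) hneuw
        · rcases Nat.eq_zero_or_pos (f u₀) with h0' | hpos'
          · rcases hf0 u₀ h0' with ⟨u, hadj, hu3⟩ | ⟨u, w, hneuw, hau, haw, -, -⟩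
            · have := hnbr' u hadj
              subst this
              omega
            · exact absurd ((hnbr' u hau).trans (hnbr' w haw).symm) hneuw
          · by_cases h1 : f v₀ = 1
            · obtain ⟨u, hadj, hu2⟩ := hf1 v₀ h1
              have := hnbr u hadj
              subst this
              omega
            · by_cases h1' : f u₀ = 1
              · obtain ⟨u, hadj, hu2⟩ := hf1 u₀ h1'
                have := hnbr' u hadj
                subst this
                omega
              · omega
      omega
    rw [hw, hΔeq]
    have c1 : ((Fintype.card V : ℤ)) ≤ 2 := by exact_mod_cast hn2
    have c2 : ((indNum G : ℤ)) ≤ 1 := by exact_mod_cast hαle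
    have c3 : (3 : ℤ) ≤ ((∑ x, f x : ℕ) : ℤ) := by exact_mod_cast hw3
    push_cast at c3 ⊢
    linarith
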